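/- arXiv:0810.3440 — 3 statements merged into one kernel-verified Lean document; each statement's English description precedes it below -/
import Mathlib

section
/- If 2 < a < b, then the set of codewords of C₀(a,b) of Hamming weight exactly a is precisely the set {c_1, …, c_b} of elementary column matrices. -/
/-- The elementary row matrix `r_i`: 1's exactly in row `i`. -/
def rowMat (a b : ℕ) (i : Fin a) : Matrix (Fin a) (Fin b) (ZMod 2) :=
  fun i' _ => if i' = i then 1 else 0

/-- The elementary column matrix `c_j`: 1's exactly in column `j`. -/
def colMat (a b : ℕ) (j : Fin b) : Matrix (Fin a) (Fin b) (ZMod 2) :=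
  fun _ j' => if j' = j then 1 else 0

/-- The code `C₀(a,b)`, spanned by the elementary row and column matrices. -/
def C0 (a b : ℕ) : Submodule (ZMod 2) (Matrix (Fin a) (Fin b) (ZMod 2)) :=
  Submodule.span (ZMod 2) (Set.range (rowMat a b) ∪ Set.range (colMat a b))

/-- The Hamming weight of a matrix: the number of nonzero entries. -/
def wt {a b : ℕ} (M : Matrix (Fin a) (Fin b) (ZMod 2)) : ℕ :=
  (Finset.univ.filter fun p : Fin a × Fin b => M p.1 p.2 ≠ 0).card


/-! A word of `C₀(a,b)` has entries `f i + g j`; writing `S` for the support of `f` and `T` for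
that of `g`, its support is `S × Tᶜ ∪ Sᶜ × T`, of size `s (b - t) + (a - s) t`. If `0 < s < a`
this is at least `(b - t) + t = b > a`, so weight `a` forces `s = 0, t = 1` or `s = a, t = b - 1`,
and in both cases the word is a single column. -/

open Finset

theorem eq_zero_and_eq_one_of_mul_add_mul_eq {s u t w : ℕ} (hpos : 0 < s + u)
    (hlt : s + u < t + w) (h : s * w + u * t = s + u) :
    (s = 0 ∧ t = 1) ∨ (u = 0 ∧ w = 1) := by
  rcases Nat.eq_zero_or_pos s with rfl | hs
  · simp only [zero_mul, zero_add] at h hpos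
    exact Or.inl ⟨rfl, (Nat.mul_eq_left hpos.ne').1 h⟩
  rcases Nat.eq_zero_or_pos u with rfl | hu
  · simp only [zero_mul, add_zero] at h
    exact Or.inr ⟨rfl, (Nat.mul_eq_left hs.ne').1 h⟩
  nlinarith

theorem ZMod.two_add_ne_zero_iff (x y : ZMod 2) : x + y ≠ 0 ↔ (x ≠ 0 ↔ y = 0) := by
  revert x y; decide

theorem ZMod.two_eq_iff_ne_zero_iff (x y : ZMod 2) : x = y ↔ (x ≠ 0 ↔ y ≠ 0) := by
  revert x y; decide

variable {a b : ℕ}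

theorem sum_smul_rowMat (f : Fin a → ZMod 2) :
    ∑ i, f i • rowMat a b i = Matrix.of fun i _ => f i := by
  ext i j
  simp [Matrix.sum_apply, rowMat]

theorem sum_smul_colMat (g : Fin b → ZMod 2) :
    ∑ j, g j • colMat a b j = Matrix.of fun _ j => g j := by
  ext i j
  simp [Matrix.sum_apply, colMat]

theorem mem_C0_iff {v : Matrix (Fin a) (Fin b) (ZMod 2)} :
    v ∈ C0 a b ↔ ∃ (f : Fin a → ZMod 2) (g : Fin b → ZMod 2), ∀ i j, v i j = f i + g j := by
  simp only [C0, Submodule.span_union, Submodule.mem_sup,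
    Submodule.mem_span_range_iff_exists_fun, exists_exists_eq_and, sum_smul_rowMat,
    sum_smul_colMat]
  simp only [← Matrix.ext_iff, Matrix.add_apply, Matrix.of_apply,
    eq_comm (a := v _ _)]

theorem wt_eq_of_ne_zero_iff {M : Matrix (Fin a) (Fin b) (ZMod 2)} {S : Finset (Fin a)}
    {T : Finset (Fin b)} (hM : ∀ i j, M i j ≠ 0 ↔ (i ∈ S ↔ j ∉ T)) :
    wt M = #S * #Tᶜ + #Sᶜ * #T := by
  have hsupp : univ.filter (fun p : Fin a × Fin b => M p.1 p.2 ≠ 0) = S ×ˢ Tᶜ ∪ Sᶜ ×ˢ T := by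
    ext ⟨i, j⟩
    simp only [mem_filter, mem_univ, true_and, hM, mem_union, mem_product, mem_compl]
    tauto
  have hdisj : Disjoint (S ×ˢ Tᶜ) (Sᶜ ×ˢ T) :=
    disjoint_product.2 (Or.inl disjoint_compl_right)
  rw [wt, hsupp, card_union_of_disjoint hdisj, card_product, card_product]

theorem eq_colMat_of_ne_zero_iff {M : Matrix (Fin a) (Fin b) (ZMod 2)} {S : Finset (Fin a)}
    {T : Finset (Fin b)} (hM : ∀ i j, M i j ≠ 0 ↔ (i ∈ S ↔ j ∉ T)) (hS : #S = 0)
    (hT : #T = 1) : M ∈ Set.range (colMat a b) := by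
  obtain ⟨j₀, rfl⟩ := card_eq_one.1 hT
  rw [card_eq_zero] at hS
  subst hS
  refine ⟨j₀, Matrix.ext fun i j => ?_⟩
  rw [ZMod.two_eq_iff_ne_zero_iff, hM]
  simp [colMat]

theorem wt_colMat (j : Fin b) : wt (colMat a b j) = a := by
  have hcol : ∀ i j',
      colMat a b j i j' ≠ 0 ↔ (i ∈ (∅ : Finset (Fin a)) ↔ j' ∉ ({j} : Finset (Fin b))) := by
    simp [colMat]
  simp [wt_eq_of_ne_zero_iff hcol]

theorem minWeight_words_C0 (a b : ℕ) (ha : 2 < a) (hab : a < b) :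
    ∀ v : Matrix (Fin a) (Fin b) (ZMod 2),
      (v ∈ C0 a b ∧ wt v = a) ↔ v ∈ Set.range (colMat a b) := by
  intro v
  constructor
  · rintro ⟨hv, hw⟩
    obtain ⟨f, g, hfg⟩ := mem_C0_iff.1 hv
    set S := univ.filter (f · ≠ 0)
    set T := univ.filter (g · ≠ 0)
    have hsupp : ∀ i j, v i j ≠ 0 ↔ (i ∈ S ↔ j ∉ T) := by
      simp [S, T, hfg, ZMod.two_add_ne_zero_iff]
    -- `(f + 1, g + 1)` describes the same word, with supports `Sᶜ` and `Tᶜ`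
    have hsupp' : ∀ i j, v i j ≠ 0 ↔ (i ∈ Sᶜ ↔ j ∉ Tᶜ) := by
      simp only [hsupp, mem_compl]; tauto
    rw [wt_eq_of_ne_zero_iff hsupp] at hw
    have hcardS := card_add_card_compl S
    have hcardT := card_add_card_compl T
    simp only [Fintype.card_fin] at hcardS hcardT
    rcases eq_zero_and_eq_one_of_mul_add_mul_eq (by omega) (by omega)
      (hw.trans hcardS.symm) with ⟨hS, hT⟩ | ⟨hS, hT⟩
    · exact eq_colMat_of_ne_zero_iff hsupp hS hT
    · exact eq_colMat_of_ne_zero_iff hsupp' hS hT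
  · rintro ⟨j, rfl⟩
    exact ⟨Submodule.subset_span (Or.inr ⟨j, rfl⟩), wt_colMat j⟩
end

section
/- If a and b are both odd, then C₁(a,b) equals the set of codewords of C₀(a,b) of even Hamming weight. -/
/-- The code `C₁(a,b)`, spanned by the matrices `r_i + c_j`. -/
def C1 (a b : ℕ) : Submodule (ZMod 2) (Matrix (Fin a) (Fin b) (ZMod 2)) :=
  Submodule.span (ZMod 2) {M | ∃ i j, M = rowMat a b i + colMat a b j}

/-! The sum of all entries is a linear functional with `entrySum v ≡ wt v (mod 2)`; it takes
the value `b` on each `r_i` and `a` on each `c_j`, so for odd `a, b` it vanishes on `C₁` but not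
on `r₀`. Since `C₀ = C₁ + ⟨r₀⟩` (as `c_j = (r₀ + c_j) - r₀`), the even-weight words of `C₀`
are exactly those of `C₁`. -/

theorem Submodule.mem_of_mem_sup_span_singleton_of_apply_eq_zero {R V : Type*} [Ring R]
    [NoZeroDivisors R] [AddCommGroup V] [Module R V] {f : V →ₗ[R] R} {p : Submodule R V}
    {e v : V} (hp : p ≤ LinearMap.ker f) (he : f e ≠ 0) (hv : v ∈ p ⊔ R ∙ e) (hfv : f v = 0) :
    v ∈ p := by
  obtain ⟨u, hu, w, hw, rfl⟩ := Submodule.mem_sup.mp hv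
  obtain ⟨t, rfl⟩ := Submodule.mem_span_singleton.mp hw
  have ht : t * f e = 0 := by
    simpa [LinearMap.mem_ker.mp (hp hu)] using hfv
  rw [(mul_eq_zero.mp ht).resolve_right he, zero_smul, add_zero]
  exact hu

def Matrix.entrySum {m n R : Type*} [Fintype m] [Fintype n] [Semiring R] :
    Matrix m n R →ₗ[R] R where
  toFun M := ∑ p : m × n, M p.1 p.2
  map_add' M N := by simp [Finset.sum_add_distrib]
  map_smul' c M := by simp [Finset.mul_sum]

open Matrix

theorem natCast_wt {a b : ℕ} (M : Matrix (Fin a) (Fin b) (ZMod 2)) :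
    (wt M : ZMod 2) = entrySum M := by
  have entry_eq_ite : ∀ x : ZMod 2, x = if x ≠ 0 then 1 else 0 := by decide
  rw [wt, Finset.natCast_card_filter]
  exact Finset.sum_congr rfl fun p _ => (entry_eq_ite _).symm

theorem even_wt_iff_entrySum_eq_zero {a b : ℕ} (M : Matrix (Fin a) (Fin b) (ZMod 2)) :
    Even (wt M) ↔ entrySum M = 0 := by
  rw [← natCast_wt, ZMod.natCast_eq_zero_iff_even]

theorem entrySum_rowMat (a b : ℕ) (i : Fin a) : entrySum (rowMat a b i) = b := by
  simp [entrySum, rowMat, Fintype.sum_prod_type]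

theorem entrySum_colMat (a b : ℕ) (j : Fin b) : entrySum (colMat a b j) = a := by
  simp [entrySum, colMat, Fintype.sum_prod_type]

theorem rowMat_add_colMat_mem_C1 (a b : ℕ) (i : Fin a) (j : Fin b) :
    rowMat a b i + colMat a b j ∈ C1 a b :=
  Submodule.subset_span ⟨i, j, rfl⟩

theorem C1_le_C0 (a b : ℕ) : C1 a b ≤ C0 a b := by
  rw [C1, Submodule.span_le]
  rintro _ ⟨i, j, rfl⟩
  exact add_mem (Submodule.subset_span (.inl ⟨i, rfl⟩)) (Submodule.subset_span (.inr ⟨j, rfl⟩))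

theorem C1_le_ker_entrySum {a b : ℕ} (ha : Odd a) (hb : Odd b) :
    C1 a b ≤ LinearMap.ker entrySum := by
  rw [C1, Submodule.span_le]
  rintro _ ⟨i, j, rfl⟩
  rw [SetLike.mem_coe, LinearMap.mem_ker, map_add, entrySum_rowMat, entrySum_colMat,
    ZMod.natCast_eq_one_iff_odd.mpr ha, ZMod.natCast_eq_one_iff_odd.mpr hb]
  rfl

theorem C0_le_C1_sup_span_rowMat {a b : ℕ} (i₀ : Fin a) (j₀ : Fin b) :
    C0 a b ≤ C1 a b ⊔ ZMod 2 ∙ rowMat a b i₀ := by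
  have hr : rowMat a b i₀ ∈ C1 a b ⊔ ZMod 2 ∙ rowMat a b i₀ :=
    Submodule.mem_sup_right (Submodule.mem_span_singleton_self _)
  have hC1 : ∀ i j, rowMat a b i + colMat a b j ∈ C1 a b ⊔ ZMod 2 ∙ rowMat a b i₀ :=
    fun i j => Submodule.mem_sup_left (rowMat_add_colMat_mem_C1 a b i j)
  rw [C0, Submodule.span_le]
  rintro _ (⟨i, rfl⟩ | ⟨j, rfl⟩)
  · have : rowMat a b i = rowMat a b i + colMat a b j₀ - (rowMat a b i₀ + colMat a b j₀)
        + rowMat a b i₀ := by abel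
    rw [SetLike.mem_coe, this]
    exact add_mem (sub_mem (hC1 i j₀) (hC1 i₀ j₀)) hr
  · have : colMat a b j = rowMat a b i₀ + colMat a b j - rowMat a b i₀ := by abel
    rw [SetLike.mem_coe, this]
    exact sub_mem (hC1 i₀ j) hr

theorem C1_eq_even_subcode (a b : ℕ) (ha : Odd a) (hb : Odd b) :
    ∀ v : Matrix (Fin a) (Fin b) (ZMod 2),
      v ∈ C1 a b ↔ (v ∈ C0 a b ∧ Even (wt v)) := by
  intro v
  have hker := C1_le_ker_entrySum ha hb
  refine ⟨fun hv => ⟨C1_le_C0 a b hv, (even_wt_iff_entrySum_eq_zero v).mpr (hker hv)⟩, ?_⟩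
  rintro ⟨hv, hwt⟩
  let i₀ : Fin a := ⟨0, ha.pos⟩
  have hr : entrySum (rowMat a b i₀) ≠ 0 := by
    rw [entrySum_rowMat, ZMod.natCast_eq_one_iff_odd.mpr hb]
    exact one_ne_zero
  exact Submodule.mem_of_mem_sup_span_singleton_of_apply_eq_zero hker hr
    (C0_le_C1_sup_span_rowMat i₀ ⟨0, hb.pos⟩ hv) ((even_wt_iff_entrySum_eq_zero v).mp hwt)
end

section
/- Suppose a + b is even and 2 < b. Then C₁(a,b) has dimension a + b - 2; its minimum distance is 2a if a < b, and 2a - 2 if 1 < a = b. -/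
/-! With `φ(x, y) = (x i + y j)ᵢⱼ`, the generator `r_i + c_j` is `φ(eᵢ, eⱼ)`, so `C₁(a,b)` is the
image under `φ` of the pairs `(x, y)` with `∑ x + ∑ y = 0`, a hyperplane of dimension `a + b - 1`.
The kernel of `φ` is spanned by `(𝟙, 𝟙)`, which lies in that hyperplane because `a + b` is even,
hence `dim C₁(a,b) = a + b - 2`.

If `x` and `y` have `s` and `t` nonzero entries, then `φ(x, y)` has weight
`s (b - t) + (a - s) t`, and the constraint is that `s + t` is even. Replacing `(s, t)` by
`(a - s, b - t)` we may take `t ≤ b - t`; then `t = 0` gives at least `2b`, `t = 1` at least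
`a + b - 2`, and `t ≥ 2` at least `a t ≥ 2a`. By parity `a < b` forces `a + 2 ≤ b`, and the bound
`min (2a) (a + b - 2)` is attained at `(s, t) = (0, 2)`, resp. `(1, 1)`. -/

open Finset

section OuterSum

variable (R : Type*) (m n : Type*) [CommRing R]

def outerSum : (m → R) × (n → R) →ₗ[R] Matrix m n R where
  toFun p := Matrix.of fun i j => p.1 i + p.2 j
  map_add' p q := by ext; simp [add_add_add_comm]
  map_smul' c p := by ext; simp [mul_add]

variable {R m n}

@[simp]
lemma outerSum_apply (x : m → R) (y : n → R) (i : m) (j : n) :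
    outerSum R m n (x, y) i j = x i + y j := rfl

lemma ker_outerSum [Nonempty m] [Nonempty n] :
    LinearMap.ker (outerSum R m n) = Submodule.span R {(1, -1)} := by
  apply le_antisymm
  · rintro ⟨x, y⟩ h
    have hxy : ∀ i j, x i + y j = 0 := fun i j => congrFun (congrFun h i) j
    obtain ⟨i₀⟩ := ‹Nonempty m›
    obtain ⟨j₀⟩ := ‹Nonempty n›
    refine Submodule.mem_span_singleton.mpr
      ⟨x i₀, Prod.ext (funext fun i => ?_) (funext fun j => ?_)⟩
    · simpa using (eq_neg_of_add_eq_zero_left (hxy i₀ j₀)).trans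
        (eq_neg_of_add_eq_zero_left (hxy i j₀)).symm
    · simpa using (eq_neg_of_add_eq_zero_right (hxy i₀ j)).symm
  · rw [Submodule.span_le, Set.singleton_subset_iff]
    ext i j
    simp

variable (R m n) [Fintype m] [Fintype n]

def totalSum : (m → R) × (n → R) →ₗ[R] R :=
  (∑ i, LinearMap.proj i).coprod (∑ j, LinearMap.proj j)

variable {R m n}

@[simp]
lemma totalSum_apply (x : m → R) (y : n → R) :
    totalSum R m n (x, y) = ∑ i, x i + ∑ j, y j := by
  simp [totalSum]

lemma ker_totalSum [DecidableEq m] [DecidableEq n] [Nonempty m] [Nonempty n] :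
    LinearMap.ker (totalSum R m n) =
      Submodule.span R (Set.range fun p : m × n => (Pi.single p.1 1, -Pi.single p.2 1)) := by
  obtain ⟨i₀⟩ := ‹Nonempty m›
  obtain ⟨j₀⟩ := ‹Nonempty n›
  set u : m × n → (m → R) × (n → R) := fun p => (Pi.single p.1 1, -Pi.single p.2 1)
  have hu : ∀ p, u p ∈ Submodule.span R (Set.range u) := fun p => Submodule.subset_span ⟨p, rfl⟩
  apply le_antisymm
  · rintro ⟨x, y⟩ h
    have hy : ∑ j, y j = -∑ i, x i := eq_neg_of_add_eq_zero_right (by simpa using h)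
    have hxy : (x, y) =
        ∑ i, x i • u (i, j₀) - ∑ j, y j • u (i₀, j) - (∑ i, x i) • u (i₀, j₀) := by
      refine Prod.ext (funext fun i => ?_) (funext fun j => ?_)
      · by_cases hi : i = i₀ <;> simp [u, Prod.fst_sum, Finset.sum_apply, Pi.single_apply, hy, hi]
      · simp [u, Prod.snd_sum, Finset.sum_apply, Pi.single_apply]
    rw [hxy]
    refine sub_mem (sub_mem ?_ ?_) (Submodule.smul_mem _ _ (hu _))
    · exact Submodule.sum_mem _ fun i _ => Submodule.smul_mem _ _ (hu _)
    · exact Submodule.sum_mem _ fun j _ => Submodule.smul_mem _ _ (hu _)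
  · rw [Submodule.span_le]
    rintro _ ⟨⟨i, j⟩, rfl⟩
    simp [u]

lemma finrank_ker_totalSum {K : Type*} [Field K] [Nonempty m] :
    Module.finrank K (LinearMap.ker (totalSum K m n)) + 1 = Fintype.card m + Fintype.card n := by
  classical
  obtain ⟨i₀⟩ := ‹Nonempty m›
  have hsurj : Function.Surjective (totalSum K m n) := fun c => ⟨(Pi.single i₀ c, 0), by simp⟩
  have := LinearMap.finrank_range_add_finrank_ker (totalSum K m n)
  rwa [LinearMap.range_eq_top.mpr hsurj, finrank_top, Module.finrank_self, Module.finrank_prod,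
    Module.finrank_fintype_fun_eq_card, Module.finrank_fintype_fun_eq_card, add_comm] at this

end OuterSum

lemma Submodule.finrank_map_add_finrank_ker_of_le {K V W : Type*} [Field K] [AddCommGroup V]
    [Module K V] [AddCommGroup W] [Module K W] {U : Submodule K V} [FiniteDimensional K U]
    (f : V →ₗ[K] W) (h : LinearMap.ker f ≤ U) :
    Module.finrank K (U.map f) + Module.finrank K (LinearMap.ker f) = Module.finrank K U := by
  rw [← LinearMap.range_domRestrict, ← (Submodule.comapSubtypeEquivOfLe h).finrank_eq,
    ← LinearMap.ker_domRestrict]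
  exact LinearMap.finrank_range_add_finrank_ker _

lemma outerSum_single_neg_single {a b : ℕ} (i : Fin a) (j : Fin b) :
    outerSum (ZMod 2) (Fin a) (Fin b) (Pi.single i 1, -Pi.single j 1) =
      rowMat a b i + colMat a b j := by
  ext i' j'
  simp [rowMat, colMat, Pi.single_apply]

lemma C1_eq_map_ker_totalSum {a b : ℕ} [NeZero a] [NeZero b] :
    C1 a b = (LinearMap.ker (totalSum (ZMod 2) (Fin a) (Fin b))).map
      (outerSum (ZMod 2) (Fin a) (Fin b)) := by
  rw [ker_totalSum, Submodule.map_span, C1, ← Set.range_comp]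
  congr 1
  ext M
  simp [outerSum_single_neg_single, eq_comm]

lemma finrank_C1 {a b : ℕ} [NeZero a] [NeZero b] (heven : Even (a + b)) :
    Module.finrank (ZMod 2) (C1 a b) = a + b - 2 := by
  have hker : LinearMap.ker (outerSum (ZMod 2) (Fin a) (Fin b)) ≤
      LinearMap.ker (totalSum (ZMod 2) (Fin a) (Fin b)) := by
    rw [ker_outerSum, Submodule.span_le, Set.singleton_subset_iff]
    simpa [Finset.sum_const] using heven.natCast_zmod_two
  have hmap := Submodule.finrank_map_add_finrank_ker_of_le _ hker
  rw [ker_outerSum, finrank_span_singleton (by simp)] at hmap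
  have hdom := finrank_ker_totalSum (K := ZMod 2) (m := Fin a) (n := Fin b)
  rw [Fintype.card_fin, Fintype.card_fin] at hdom
  rw [C1_eq_map_ker_totalSum]
  omega

lemma ZMod.two_sum_eq_hammingNorm {ι : Type*} [Fintype ι] (x : ι → ZMod 2) :
    ∑ i, x i = hammingNorm x := by
  rw [hammingNorm, Finset.natCast_card_filter]
  refine Finset.sum_congr rfl fun i _ => ?_
  generalize x i = c
  revert c
  decide

lemma Finset.card_filter_xor {α β : Type*} [Fintype α] [Fintype β] [DecidableEq α]
    [DecidableEq β] (s : Finset α) (t : Finset β) :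
    #{p : α × β | Xor (p.1 ∈ s) (p.2 ∈ t)} = #s * #tᶜ + #sᶜ * #t := by
  have : ({p : α × β | Xor (p.1 ∈ s) (p.2 ∈ t)} : Finset _) = s ×ˢ tᶜ ∪ sᶜ ×ˢ t := by
    ext ⟨i, j⟩
    simp [Xor, and_comm]
  rw [this, card_union_of_disjoint, card_product, card_product]
  exact disjoint_left.mpr fun p h₁ h₂ => by simp_all

lemma wt_eq_zero {a b : ℕ} {M : Matrix (Fin a) (Fin b) (ZMod 2)} : wt M = 0 ↔ M = 0 := by
  simp [wt, filter_eq_empty_iff, ← Matrix.ext_iff]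

lemma wt_outerSum {a b : ℕ} (x : Fin a → ZMod 2) (y : Fin b → ZMod 2) :
    wt (outerSum (ZMod 2) (Fin a) (Fin b) (x, y)) =
      hammingNorm x * (b - hammingNorm y) + (a - hammingNorm x) * hammingNorm y := by
  have hxor : ∀ c d : ZMod 2, c + d ≠ 0 ↔ Xor (c ≠ 0) (d ≠ 0) := by decide
  have := card_filter_xor {i | x i ≠ 0} {j | y j ≠ 0}
  simp only [mem_filter_univ] at this
  simp only [wt, outerSum_apply, hxor]
  rw [this, card_compl, card_compl, Fintype.card_fin, Fintype.card_fin]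
  rfl

lemma exists_hammingNorm_eq {n s : ℕ} (hs : s ≤ n) : ∃ x : Fin n → ZMod 2, hammingNorm x = s :=
  ⟨fun i => if (i : ℕ) < s then 1 else 0, by
    simpa [hammingNorm] using Fin.card_filter_val_lt.trans (min_eq_right hs)⟩

lemma min_le_mul_add_mul {s s' t t' : ℕ} (hle : s + s' ≤ t + t') (hst : Even (s + t))
    (hst' : Even (s' + t')) (hw : s * t' + s' * t ≠ 0) :
    min (2 * (s + s')) (s + s' + (t + t') - 2) ≤ s * t' + s' * t := by
  wlog htt' : t ≤ t' generalizing s s' t t'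
  · have := this (s := s') (s' := s) (t := t') (t' := t) (by omega) hst' hst (by omega) (by omega)
    rwa [add_comm s', add_comm t', add_comm (s' * t)] at this
  rw [Nat.even_iff] at hst hst'
  rcases t with _ | _ | t
  · have hs : s ≠ 0 := by rintro rfl; simp at hw
    obtain ⟨s, rfl⟩ : ∃ k, s = k + 2 := ⟨s - 2, by omega⟩
    refine (min_le_left _ _).trans ?_
    nlinarith
  · obtain ⟨s, rfl⟩ : ∃ k, s = k + 1 := ⟨s - 1, by omega⟩
    obtain ⟨t', rfl⟩ : ∃ k, t' = k + 1 := ⟨t' - 1, by omega⟩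
    refine (min_le_right _ _).trans ?_
    ring_nf
    omega
  · refine (min_le_left _ _).trans ?_
    nlinarith

lemma min_le_wt_of_mem_C1 {a b : ℕ} [NeZero a] [NeZero b] (hab : a ≤ b) (heven : Even (a + b))
    {v : Matrix (Fin a) (Fin b) (ZMod 2)} (hv : v ∈ C1 a b) (hv₀ : v ≠ 0) :
    min (2 * a) (a + b - 2) ≤ wt v := by
  rw [C1_eq_map_ker_totalSum] at hv
  obtain ⟨⟨x, y⟩, hxy, rfl⟩ := hv
  have hpar : Even (hammingNorm x + hammingNorm y) := by
    rw [← ZMod.natCast_eq_zero_iff_even]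
    simpa [ZMod.two_sum_eq_hammingNorm] using hxy
  have hx : hammingNorm x ≤ a := by simpa using hammingNorm_le_card_fintype (x := x)
  have hy : hammingNorm y ≤ b := by simpa using hammingNorm_le_card_fintype (x := y)
  have hw := mt wt_eq_zero.mp hv₀
  rw [wt_outerSum] at hw ⊢
  rw [Nat.even_iff] at heven hpar
  have := min_le_mul_add_mul (s' := a - hammingNorm x) (t' := b - hammingNorm y) (by omega)
    (Nat.even_iff.mpr hpar) (Nat.even_iff.mpr (by omega)) hw
  rwa [Nat.add_sub_cancel' hx, Nat.add_sub_cancel' hy] at this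

lemma exists_mem_C1_wt_eq {a b s t : ℕ} [NeZero a] [NeZero b] (hs : s ≤ a) (ht : t ≤ b)
    (hst : Even (s + t)) : ∃ v ∈ C1 a b, wt v = s * (b - t) + (a - s) * t := by
  obtain ⟨x, rfl⟩ := exists_hammingNorm_eq hs
  obtain ⟨y, rfl⟩ := exists_hammingNorm_eq ht
  refine ⟨outerSum (ZMod 2) (Fin a) (Fin b) (x, y), ?_, wt_outerSum x y⟩
  rw [C1_eq_map_ker_totalSum]
  refine Submodule.mem_map_of_mem (LinearMap.mem_ker.mpr ?_)
  simpa [ZMod.two_sum_eq_hammingNorm] using hst.natCast_zmod_two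

theorem dim_minDistance_C1 (a b : ℕ) (ha : 1 ≤ a) (hab : a ≤ b) (hb : 2 < b)
    (heven : Even (a + b)) :
    Module.finrank (ZMod 2) (C1 a b) = a + b - 2 ∧
    (∀ v ∈ C1 a b, v ≠ 0 → (if a < b then 2 * a else 2 * a - 2) ≤ wt v) ∧
    (∃ v ∈ C1 a b, v ≠ 0 ∧ wt v = if a < b then 2 * a else 2 * a - 2) := by
  have : NeZero a := ⟨by omega⟩
  have : NeZero b := ⟨by omega⟩
  have hpar := Nat.even_iff.mp heven
  have hmin : (if a < b then 2 * a else 2 * a - 2) = min (2 * a) (a + b - 2) := by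
    split_ifs <;> omega
  rw [hmin]
  refine ⟨finrank_C1 heven, fun v hv hv₀ => min_le_wt_of_mem_C1 hab heven hv hv₀, ?_⟩
  obtain ⟨v, hv, hwt⟩ : ∃ v ∈ C1 a b, wt v = min (2 * a) (a + b - 2) := by
    rcases hab.lt_or_eq with hlt | rfl
    · obtain ⟨v, hv, hwt⟩ := exists_mem_C1_wt_eq (s := 0) (t := 2) (Nat.zero_le a) hb.le even_two
      exact ⟨v, hv, by rw [hwt]; omega⟩
    · obtain ⟨v, hv, hwt⟩ := exists_mem_C1_wt_eq (s := 1) (t := 1) ha ha even_two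
      exact ⟨v, hv, by rw [hwt]; omega⟩
  exact ⟨v, hv, fun h => (by omega : wt v ≠ 0) (wt_eq_zero.mpr h), hwt⟩
end
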